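/- Let X be a set with Hagemann–Mitschke operations w₁, …, w_{n−1}, and let R be a binary relation on X compatible with each w_i such that R is reflexive and transitive. Then R is symmetric, i.e. R is an equivalence relation. -/

import Mathlib

/-- Relational composite, path order: first `R`, then `S`
(equals `S ∘ R` in the paper's notation: `(S ∘ R) x z ↔ ∃ y, R x y ∧ S y z`). -/
def relComp {X : Type*} (R S : X → X → Prop) : X → X → Prop :=
  fun x z => ∃ y, R x y ∧ S y z

/-- Alternating composite `(R,S)_m`: `m` alternating factors starting with `R`,
composing left to right. -/
def altComp {X : Type*} (R S : X → X → Prop) : ℕ → (X → X → Prop)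
  | 0 => Eq
  | m + 1 => relComp R (altComp S R m)

/-- The `k`-fold composite `R^k`. -/
def relPow {X : Type*} (R : X → X → Prop) (k : ℕ) : X → X → Prop :=
  altComp R R k

/-! Compatibility applied to `R y y`, `R x y`, `R x x` links consecutive terms of
`y = w₁(y,x,x) R w₁(y,y,x) = w₂(y,x,x) R ⋯ R w_{n-1}(y,y,x) = x`, so `R x y` gives
`R^{n-1} y x`; transitivity collapses `R^{n-1}` back into `R`. -/

section RelPow

variable {X : Type*} {R : X → X → Prop}

theorem relPow_of_chain (f : ℕ → X) (k : ℕ) (hf : ∀ i < k, R (f i) (f (i + 1))) :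
    relPow R k (f 0) (f k) := by
  induction k generalizing f with
  | zero => rfl
  | succ k ih =>
    exact ⟨f 1, hf 0 k.succ_pos, ih (fun i => f (i + 1)) fun i hi => hf _ (by omega)⟩

theorem relPow_le_of_refl_of_trans (hrefl : ∀ x, R x x)
    (htrans : ∀ x y z, R x y → R y z → R x z) (k : ℕ) {x y : X} (h : relPow R k x y) :
    R x y := by
  induction k generalizing x with
  | zero => exact h ▸ hrefl x
  | succ k ih =>
    obtain ⟨z, hxz, hzy⟩ := h
    exact htrans _ _ _ hxz (ih hzy)

end RelPow

theorem relPow_flip_of_hagemannMitschke {X : Type*} {n : ℕ} (hn : 2 ≤ n)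
    {w : ℕ → X → X → X → X}
    (h1 : ∀ x y, w 1 x y y = x)
    (hmid : ∀ i, 1 ≤ i → i ≤ n - 2 → ∀ x y, w i x x y = w (i + 1) x y y)
    (hlast : ∀ x y, w (n - 1) x x y = y)
    {R : X → X → Prop} (hrefl : ∀ x, R x x)
    (hcompat : ∀ i, 1 ≤ i → i ≤ n - 1 → ∀ a a' b b' c c',
      R a a' → R b b' → R c c' → R (w i a b c) (w i a' b' c'))
    {x y : X} (hxy : R x y) : relPow R (n - 1) y x := by
  let f : ℕ → X := fun i => if i = 0 then y else w i y y x
  have hstart : ∀ i < n - 1, f i = w (i + 1) y x x := by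
    rintro (_ | i) hi
    · exact (h1 y x).symm
    · exact hmid (i + 1) (by omega) (by omega) y x
  have hend : f (n - 1) = x := by
    simp only [f, if_neg (show n - 1 ≠ 0 by omega), hlast]
  rw [← hend]
  refine relPow_of_chain f (n - 1) fun i hi => ?_
  rw [hstart i hi]
  exact hcompat (i + 1) (by omega) (by omega) y y x y x x (hrefl y) hxy (hrefl x)

theorem stmt_18 {X : Type*} (n : ℕ) (hn : 2 ≤ n)
    (w : ℕ → X → X → X → X)
    (h1 : ∀ x y, w 1 x y y = x)
    (hmid : ∀ i, 1 ≤ i → i ≤ n - 2 → ∀ x y, w i x x y = w (i + 1) x y y)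
    (hlast : ∀ x y, w (n - 1) x x y = y)
    (R : X → X → Prop) (hrefl : ∀ x, R x x)
    (htrans : ∀ x y z, R x y → R y z → R x z)
    (hcompat : ∀ i, 1 ≤ i → i ≤ n - 1 → ∀ a a' b b' c c',
      R a a' → R b b' → R c c' → R (w i a b c) (w i a' b' c')) :
    ∀ x y, R x y → R y x := fun _ _ hxy =>
  relPow_le_of_refl_of_trans hrefl htrans (n - 1)
    (relPow_flip_of_hagemannMitschke hn h1 hmid hlast hrefl hcompat hxy)
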